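/- Let p ≥ 2 and let (Y^1_j, …, Y^p_j), j = 1, 2, …, be i.i.d. copies of the Pick-and-Freeze vector (Y^1, …, Y^p), where Y^i = f(X, X'_i) with X, X'_1, …, X'_p mutually independent and X'_1, …, X'_p identically distributed, f measurable, and Y^1 ∈ L^p. For l ∈ {1,…,p} set P_{l,j} = C(p,l)^{-1} Σ_{1 ≤ k_1 < … < k_l ≤ p} ∏_{i=1}^l Y^{k_i}_j and P̄_l = N^{-1} Σ_{j=1}^N P_{l,j}, with the convention P_{0,j} = 1, and define the estimator H_{p,N} = Σ_{l=0}^p C(p,l) (−1)^{p−l} (P̄_1)^{p−l} P̄_l. Then H_{p,N} converges almost surely, as N → ∞, to H^p = E[(E[Y^1|X] − E[Y^1])^p]. -/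

import Mathlib

open MeasureTheory ProbabilityTheory Filter Finset
open scoped ENNReal Topology

private lemma aux_prod_abs_le_sum_pow {ι : Type*} (s : Finset ι) (hs : s.Nonempty) (a : ι → ℝ) :
    ∏ i ∈ s, |a i| ≤ ∑ i ∈ s, |a i| ^ s.card := by
  obtain ⟨i₀, hi₀, hM⟩ := s.exists_mem_eq_sup' hs fun i => |a i|
  calc ∏ i ∈ s, |a i| ≤ ∏ _i ∈ s, (s.sup' hs fun i => |a i|) :=
        Finset.prod_le_prod (fun i _ => abs_nonneg _) (fun i hi => Finset.le_sup' (fun i => |a i|) hi)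
    _ = (s.sup' hs fun i => |a i|) ^ s.card := by rw [Finset.prod_const]
    _ = |a i₀| ^ s.card := by rw [hM]
    _ ≤ ∑ i ∈ s, |a i| ^ s.card :=
        Finset.single_le_sum (f := fun i => |a i| ^ s.card) (fun i _ => by positivity) hi₀

/-- **Strong consistency of the multiple Pick-and-Freeze estimator.**
The Monte Carlo estimator `H_{p,N}` built from i.i.d. copies of the Pick-and-Freeze
vector `(Y^1, …, Y^p)` converges almost surely to
`H^p = E[(E[Y^1 | X] − E[Y^1])^p]`. -/
theorem multiple_pick_and_freeze_consistent
    {Ω : Type*} {E E' : Type u} [MeasurableSpace Ω] [mE : MeasurableSpace E]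
    [mE' : MeasurableSpace E'] (P : Measure Ω) [IsProbabilityMeasure P]
    (p : ℕ) (hp : 2 ≤ p)
    (X : Ω → E) (X' : Fin p → Ω → E')
    (hX : Measurable X) (hX' : ∀ i, Measurable (X' i))
    (hindep : iIndepFun
      (β := fun i : Option (Fin p) => Option.elim i E fun _ => E')
      (m := fun i => match i with | none => mE | some _ => mE')
      (fun i => match i with | none => X | some j => X' j) P)
    (hid : ∀ i j, Measure.map (X' i) P = Measure.map (X' j) P)
    (f : E × E' → ℝ) (hf : Measurable f)
    (Y : Fin p → Ω → ℝ) (hYdef : ∀ i ω, Y i ω = f (X ω, X' i ω))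
    (i0 : Fin p) (hi0 : (i0 : ℕ) = 0)
    (hLp : MemLp (Y i0) p P)
    -- i.i.d. copies of the Pick-and-Freeze vector `(Y^1, …, Y^p)`
    (V : ℕ → Ω → (Fin p → ℝ))
    (hVindep : iIndepFun (m := fun _ => inferInstance) V P)
    (hVlaw : ∀ j, Measure.map (V j) P = Measure.map (fun ω i => Y i ω) P)
    -- the symmetrized products `P_{l,j}`, their empirical means `P̄_l` and the estimator
    (Pprod : ℕ → ℕ → Ω → ℝ)
    (hPprod : ∀ l j ω, Pprod l j ω = ((p.choose l : ℝ))⁻¹ *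
      ∑ s ∈ Finset.powersetCard l (Finset.univ : Finset (Fin p)), ∏ i ∈ s, V j ω i)
    (Pbar : ℕ → ℕ → Ω → ℝ)
    (hPbar : ∀ l N ω, Pbar l N ω = (N : ℝ)⁻¹ * ∑ j ∈ Finset.range N, Pprod l j ω)
    (H : ℕ → Ω → ℝ)
    (hH : ∀ N ω, H N ω = ∑ l ∈ Finset.range (p + 1),
      (p.choose l : ℝ) * (-1 : ℝ) ^ (p - l) * (Pbar 1 N ω) ^ (p - l) * Pbar l N ω) :
    ∀ᵐ ω ∂P, Tendsto (fun N => H N ω) atTop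
      (nhds (∫ ω', ((MeasureTheory.condExp (MeasurableSpace.comap X mE) P (Y i0)) ω'
        - ∫ ω'', Y i0 ω'' ∂P) ^ p ∂P)) := by
  classical
  have hone : (1 : ℝ≥0∞) ≤ (p : ℝ≥0∞) := by exact_mod_cast (by omega : (1:ℕ) ≤ p)
  set μ : Measure E := P.map X with hμdef
  set ν : Measure E' := P.map (X' i0) with hνdef
  haveI : IsProbabilityMeasure μ := Measure.isProbabilityMeasure_map hX.aemeasurable
  haveI : IsProbabilityMeasure ν := Measure.isProbabilityMeasure_map (hX' i0).aemeasurable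
  letI msE' : MeasureSpace E' := ⟨ν⟩
  haveI : SigmaFinite (volume : Measure E') := (inferInstance : SigmaFinite ν)
  set πν : Measure (Fin p → E') := Measure.pi fun _ => ν with hπdef
  haveI : IsProbabilityMeasure πν := by rw [hπdef]; infer_instance
  set g : E → ℝ := fun x => ∫ y, f (x, y) ∂ν with hgdef
  have hgsm : StronglyMeasurable g := hf.stronglyMeasurable.integral_prod_right'
  set W : Ω → Fin p → E' := fun ω i => X' i ω with hWdef
  have hWmeas : Measurable W := measurable_pi_lambda _ fun i => hX' i
  set T : Ω → E × (Fin p → E') := fun ω => (X ω, W ω) with hTdef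
  have hTmeas : Measurable T := hX.prodMk hWmeas
  have hYmeas : ∀ i, Measurable (Y i) := by
    intro i
    have : Y i = fun ω => f (X ω, X' i ω) := funext fun ω => hYdef i ω
    rw [this]; exact hf.comp (hX.prodMk (hX' i))
  -- Step A : law of the vector (X' i)_i is the product measure
  have hWlaw : P.map W = πν := by
    refine (Measure.pi_eq fun s hs => ?_).symm
    rw [Measure.map_apply hWmeas (MeasurableSet.univ_pi hs)]
    have h1 := hindep.measure_inter_preimage_eq_mul (Finset.univ : Finset (Option (Fin p)))
      (sets := fun i => match i with | none => (Set.univ : Set E) | some j => s j)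
      (fun i _ => by cases i with
        | none => exact MeasurableSet.univ
        | some j => exact hs j)
    refine Eq.trans (congrArg P ?_) (h1.trans ?_)
    · ext ω
      simp only [Finset.mem_univ, Set.iInter_true, Set.mem_iInter, Set.mem_preimage, Set.mem_pi,
        Set.mem_univ, true_implies, Option.forall, hWdef]
      tauto
    · rw [Fintype.prod_option]
      simp only [Set.preimage_univ, measure_univ, one_mul]
      change P Set.univ * _ = _
      rw [measure_univ, one_mul]
      refine Finset.prod_congr rfl fun j _ => ?_
      change P ((X' j) ⁻¹' s j) = _
      rw [← Measure.map_apply (hX' j) (hs j), hid j i0]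
  -- Step B : X is independent of the vector W
  letI mOpt : ∀ i : Option (Fin p), MeasurableSpace (Option.elim i E fun _ => E') :=
    fun i => match i with | none => mE | some _ => mE'
  have hXW : IndepFun X W P := by
    have hd : Disjoint ({none} : Finset (Option (Fin p))) (Finset.univ.image some) := by
      simp [Finset.disjoint_singleton_left, Finset.mem_image]
    have h := hindep.indepFun_finset {none} (Finset.univ.image some) hd
      (fun i => by cases i with
        | none => exact hX
        | some j => exact hX' j)
    have h2 := h.comp
      (φ := fun v : (∀ i : ({none} : Finset (Option (Fin p))),
          Option.elim (i : Option (Fin p)) E fun _ => E') =>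
        v ⟨none, Finset.mem_singleton_self none⟩)
      (ψ := fun v : (∀ i : (Finset.univ.image some : Finset (Option (Fin p))),
          Option.elim (i : Option (Fin p)) E fun _ => E') =>
        (fun j : Fin p => v ⟨some j, Finset.mem_image_of_mem some (Finset.mem_univ j)⟩))
      (measurable_pi_apply (X := fun i : ({none} : Finset (Option (Fin p))) =>
          Option.elim (i : Option (Fin p)) E fun _ => E') _)
      (measurable_pi_lambda _ fun j => measurable_pi_apply _)
    exact h2
  -- Step C : joint law of (X, W) is the product μ ⊗ πν
  have hTlaw : P.map T = μ.prod πν := by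
    rw [hTdef]
    rw [(indepFun_iff_map_prod_eq_prod_map_map hX.aemeasurable hWmeas.aemeasurable).mp hXW, hWlaw]
  -- Step D : evaluation maps
  have heval : ∀ i : Fin p, πν.map (fun w : Fin p → E' => w i) = ν := by
    intro i
    ext t ht
    rw [Measure.map_apply (measurable_pi_apply i) ht]
    have : (fun w : Fin p → E' => w i) ⁻¹' t
        = Set.pi Set.univ (Function.update (fun _ => Set.univ) i t) := by
      rw [← Set.eval_preimage]
    rw [this, hπdef, Measure.pi_pi]
    rw [Finset.prod_eq_single_of_mem i (Finset.mem_univ i)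
      (fun j _ hji => by rw [Function.update_of_ne hji]; simp)]
    rw [Function.update_self]
  have hproj : ∀ i : Fin p,
      (μ.prod πν).map (fun z : E × (Fin p → E') => (z.1, z.2 i)) = μ.prod ν := by
    intro i
    have := Measure.map_prod_map (f := id) (g := fun w : Fin p → E' => w i) μ πν
      measurable_id (measurable_pi_apply i)
    rw [Measure.map_id, heval i] at this
    exact this.symm
  have hpairlaw : P.map (fun ω => (X ω, X' i0 ω)) = μ.prod ν := by
    have hcomp : (fun ω => (X ω, X' i0 ω))
        = (fun z : E × (Fin p → E') => (z.1, z.2 i0)) ∘ T := rfl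
    rw [hcomp, ← Measure.map_map (g := fun z : E × (Fin p → E') => (z.1, z.2 i0)) (f := T)
      (measurable_fst.prodMk (measurable_snd.eval)) hTmeas,
      hTlaw, hproj i0]
  -- Step E : f is in L^p of the product measure
  have hYpair : (fun ω => f (X ω, X' i0 ω)) = Y i0 := funext fun ω => (hYdef i0 ω).symm
  have hfLp : MemLp f p (μ.prod ν) := by
    rw [← hpairlaw]
    refine (memLp_map_measure_iff hf.stronglyMeasurable.aestronglyMeasurable
      (hX.prodMk (hX' i0)).aemeasurable).mpr ?_
    show MemLp (fun ω => f (X ω, X' i0 ω)) p P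
    rw [hYpair]; exact hLp
  have hfi : ∀ i : Fin p,
      MemLp (fun z : E × (Fin p → E') => f (z.1, z.2 i)) p (μ.prod πν) := by
    intro i
    have := (memLp_map_measure_iff (p := (p : ℝ≥0∞)) (μ := μ.prod πν) (f := fun z : E × (Fin p → E') => (z.1, z.2 i))
      hf.stronglyMeasurable.aestronglyMeasurable
      (measurable_fst.prodMk ((measurable_pi_apply i).comp measurable_snd)).aemeasurable)
    rw [hproj i] at this
    exact this.mp hfLp
  have hfimeas : ∀ i : Fin p,
      Measurable (fun z : E × (Fin p → E') => f (z.1, z.2 i)) := fun i =>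
    hf.comp (measurable_fst.prodMk ((measurable_pi_apply i).comp measurable_snd))
  -- Step F : integrability of the products on the product space
  have hFmeas : ∀ s : Finset (Fin p),
      Measurable (fun z : E × (Fin p → E') => ∏ i ∈ s, f (z.1, z.2 i)) := fun s =>
    Finset.measurable_prod _ fun i _ => hfimeas i
  have hFint : ∀ s : Finset (Fin p),
      Integrable (fun z : E × (Fin p → E') => ∏ i ∈ s, f (z.1, z.2 i)) (μ.prod πν) := by
    intro s
    rcases s.eq_empty_or_nonempty with rfl | hs
    · simpa using (integrable_const (1 : ℝ) (μ := μ.prod πν))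
    · have hcard : (s.card : ℝ≥0∞) ≤ (p : ℝ≥0∞) := by
        exact_mod_cast (by simpa using Finset.card_le_card (Finset.subset_univ s))
      have hil : ∀ i : Fin p, Integrable
          (fun z : E × (Fin p → E') => |f (z.1, z.2 i)| ^ s.card) (μ.prod πν) := by
        intro i
        have h1 : MemLp (fun z : E × (Fin p → E') => f (z.1, z.2 i)) (s.card) (μ.prod πν) :=
          (hfi i).mono_exponent hcard
        have h2 := h1.integrable_norm_rpow (by
            simpa using Finset.card_ne_zero_of_mem hs.choose_spec) (by simp)
        simpa [ENNReal.toReal_natCast, Real.rpow_natCast, Real.norm_eq_abs] using h2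
      refine Integrable.mono' (integrable_finset_sum s fun i _ => hil i)
        (hFmeas s).aestronglyMeasurable (Filter.Eventually.of_forall fun z => ?_)
      rw [Real.norm_eq_abs, Finset.abs_prod]
      exact aux_prod_abs_le_sum_pow s hs _
  -- Step G : inner Fubini identity
  have hvol : πν = (volume : Measure (Fin p → E')) := by
    rw [hπdef]; exact volume_pi.symm
  have hinner : ∀ (s : Finset (Fin p)) (x : E),
      ∫ w, ∏ i ∈ s, f (x, w i) ∂πν = g x ^ s.card := by
    intro s x
    have h1 : ∀ w : Fin p → E', ∏ i ∈ s, f (x, w i)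
        = ∏ i : Fin p, (if i ∈ s then f (x, w i) else 1) := by
      intro w
      rw [Finset.prod_ite_mem Finset.univ s (fun i => f (x, w i)), Finset.univ_inter]
    simp_rw [h1]
    rw [hvol]
    rw [MeasureTheory.integral_fintype_prod_volume_eq_prod (ι := Fin p)
      (f := fun i y => if i ∈ s then f (x, y) else 1)]
    have h2 : ∀ i : Fin p, (∫ y, (if i ∈ s then f (x, y) else 1) ∂(volume : Measure E'))
        = if i ∈ s then g x else 1 := by
      intro i
      split_ifs with h
      · rfl
      · simp
    rw [Finset.prod_congr rfl fun i _ => h2 i, Finset.prod_ite_mem Finset.univ s fun _ => g x,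
      Finset.univ_inter, Finset.prod_const]
  -- Step H : moments identities
  have hYprodeq : ∀ s : Finset (Fin p), (fun ω => ∏ i ∈ s, Y i ω)
      = fun ω => ∏ i ∈ s, f ((T ω).1, (T ω).2 i) := by
    intro s; funext ω
    exact Finset.prod_congr rfl fun i _ => hYdef i ω
  have hYprodint : ∀ s : Finset (Fin p), Integrable (fun ω => ∏ i ∈ s, Y i ω) P := by
    intro s
    rw [hYprodeq s]
    have h1 := (integrable_map_measure (μ := P) (f := T)
      (g := fun z : E × (Fin p → E') => ∏ i ∈ s, f (z.1, z.2 i))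
      (hFmeas s).aestronglyMeasurable hTmeas.aemeasurable).mp
    rw [hTlaw] at h1
    exact h1 (hFint s)
  have hMom : ∀ s : Finset (Fin p),
      (∫ ω, ∏ i ∈ s, Y i ω ∂P) = ∫ x, g x ^ s.card ∂μ := by
    intro s
    have h1 := integral_map (μ := P) (φ := T) (f := fun z : E × (Fin p → E') =>
      ∏ i ∈ s, f (z.1, z.2 i)) hTmeas.aemeasurable (hFmeas s).aestronglyMeasurable
    rw [hTlaw] at h1
    calc ∫ ω, ∏ i ∈ s, Y i ω ∂P
        = ∫ ω, ∏ i ∈ s, f ((T ω).1, (T ω).2 i) ∂P := by rw [hYprodeq s]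
      _ = ∫ z : E × (Fin p → E'), ∏ i ∈ s, f (z.1, z.2 i) ∂(μ.prod πν) := h1.symm
      _ = ∫ x, ∫ w, ∏ i ∈ s, f (x, w i) ∂πν ∂μ := integral_prod _ (hFint s)
      _ = ∫ x, g x ^ s.card ∂μ :=
          integral_congr_ae (Filter.Eventually.of_forall fun x => hinner s x)
  have hglint : ∀ l : ℕ, l ≤ p → Integrable (fun x => g x ^ l) μ := by
    intro l hl
    obtain ⟨s, -, hcard⟩ := Finset.exists_subset_card_eq (s := (Finset.univ : Finset (Fin p))) (n := l)
      (by simpa using hl)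
    have h1 := (hFint s).integral_prod_left
    refine h1.congr (Filter.Eventually.of_forall fun x => ?_)
    have h2 := hinner s x
    rw [hcard] at h2
    exact h2
  -- Step I : the freezing lemma (identification of the conditional expectation)
  set c : ℝ := ∫ x, g x ∂μ with hcdef
  have hcY : ∫ ω, Y i0 ω ∂P = c := by
    have := hMom {i0}
    simpa using this
  have hm : MeasurableSpace.comap X mE ≤ ‹MeasurableSpace Ω› := hX.comap_le
  haveI : SigmaFinite (P.trim hm) := inferInstance
  have hfint : Integrable f (μ.prod ν) := hfLp.integrable hone
  have hgint : Integrable g μ := hfint.integral_prod_left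
  have hgXint : Integrable (fun ω => g (X ω)) P := by
    refine (integrable_map_measure hgsm.aestronglyMeasurable hX.aemeasurable).mp ?_
    rw [← hμdef]; exact hgint
  have hXm : Measurable[MeasurableSpace.comap X mE] X := fun t ht => ⟨t, ht, rfl⟩
  have hce : (fun ω => g (X ω)) =ᵐ[P] P[Y i0 | MeasurableSpace.comap X mE] := by
    refine ae_eq_condExp_of_forall_setIntegral_eq hm (hLp.integrable hone)
      (fun s _ _ => hgXint.integrableOn) ?_ ?_
    · rintro s ⟨B, hB, rfl⟩ -
      have hL : ∫ ω in X ⁻¹' B, g (X ω) ∂P = ∫ x in B, g x ∂μ := by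
        rw [hμdef, setIntegral_map hB hgsm.aestronglyMeasurable hX.aemeasurable]
      have hpre : X ⁻¹' B = (fun ω => (X ω, X' i0 ω)) ⁻¹' (B ×ˢ (Set.univ : Set E')) := by
        ext ω; simp
      have hR : ∫ ω in X ⁻¹' B, Y i0 ω ∂P = ∫ x in B, g x ∂μ := by
        rw [← hYpair, hpre,
          ← setIntegral_map (hB.prod MeasurableSet.univ) hf.stronglyMeasurable.aestronglyMeasurable
            (hX.prodMk (hX' i0)).aemeasurable,
          hpairlaw, setIntegral_prod f (hfint.integrableOn)]
        exact setIntegral_congr_fun hB fun x _ => by rw [Measure.restrict_univ]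
      rw [hL, hR]
    · exact StronglyMeasurable.aestronglyMeasurable (hgsm.measurable.comp hXm).stronglyMeasurable
  -- Step J : value of the limit integral
  have hRval : (∫ ω', ((MeasureTheory.condExp (MeasurableSpace.comap X mE) P (Y i0)) ω'
        - ∫ ω'', Y i0 ω'' ∂P) ^ p ∂P)
      = ∑ l ∈ Finset.range (p + 1),
        (p.choose l : ℝ) * (-1 : ℝ) ^ (p - l) * c ^ (p - l) * ∫ x, g x ^ l ∂μ := by
    have h1 : (∫ ω', ((MeasureTheory.condExp (MeasurableSpace.comap X mE) P (Y i0)) ω'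
          - ∫ ω'', Y i0 ω'' ∂P) ^ p ∂P) = ∫ ω, (g (X ω) - c) ^ p ∂P := by
      refine integral_congr_ae ?_
      filter_upwards [hce] with ω h
      rw [← h, hcY]
    have h2 : ∫ ω, (g (X ω) - c) ^ p ∂P = ∫ x, (g x - c) ^ p ∂μ := by
      rw [hμdef, integral_map (f := fun x => (g x - c) ^ p) hX.aemeasurable
        ((hgsm.measurable.sub measurable_const).pow_const p).aestronglyMeasurable]
    have hsub : ∀ x : E, (g x - c) ^ p = ∑ l ∈ Finset.range (p + 1),
        ((p.choose l : ℝ) * (-1 : ℝ) ^ (p - l) * c ^ (p - l)) * g x ^ l := by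
      intro x
      rw [sub_pow]
      refine Finset.sum_congr rfl fun l hl => ?_
      rw [Finset.mem_range] at hl
      have hsign : (-1 : ℝ) ^ (l + p) = (-1 : ℝ) ^ (p - l) := by
        have he : l + p = (p - l) + 2 * l := by omega
        rw [he, pow_add, pow_mul, neg_one_sq, one_pow, mul_one]
      rw [hsign]; ring
    rw [h1, h2]
    simp_rw [hsub]
    rw [integral_finset_sum _ (fun l hl =>
      ((hglint l (by rw [Finset.mem_range] at hl; omega)).const_mul _))]
    exact Finset.sum_congr rfl fun l _ => by rw [integral_const_mul]
  -- Step K : a.e. measurability of the V's and of the Y-vector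
  have hYvec : Measurable (fun ω (i : Fin p) => Y i ω) :=
    measurable_pi_lambda _ fun i => hYmeas i
  haveI : IsProbabilityMeasure (P.map (fun ω (i : Fin p) => Y i ω)) :=
    Measure.isProbabilityMeasure_map hYvec.aemeasurable
  have hVmeas : ∀ j, AEMeasurable (V j) P := by
    intro j
    by_contra h
    have h1 : (Measure.map (fun ω (i : Fin p) => Y i ω) P) Set.univ = 1 := measure_univ
    rw [← hVlaw j, Measure.map_of_not_aemeasurable h] at h1
    simp at h1
  -- Step L : strong law of large numbers for each `l ≤ p`
  have key : ∀ l : ℕ, l ≤ p → ∀ᵐ ω ∂P,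
      Tendsto (fun N => Pbar l N ω) atTop (𝓝 (∫ x, g x ^ l ∂μ)) := by
    intro l hl
    set hfun : (Fin p → ℝ) → ℝ := fun v => ((p.choose l : ℝ))⁻¹ *
      ∑ s ∈ Finset.powersetCard l (Finset.univ : Finset (Fin p)), ∏ i ∈ s, v i with hhdef
    have hhm : Measurable hfun := measurable_const.mul
      (Finset.measurable_sum _ fun s _ => Finset.measurable_prod _ fun i _ =>
        measurable_pi_apply i)
    have hPj : ∀ j, Pprod l j = hfun ∘ V j := fun j => funext fun ω => hPprod l j ω
    have hcomp_int : Integrable (hfun ∘ (fun ω (i : Fin p) => Y i ω)) P := by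
      have he : (hfun ∘ fun ω (i : Fin p) => Y i ω) = fun ω => ((p.choose l : ℝ))⁻¹ *
          ∑ s ∈ Finset.powersetCard l (Finset.univ : Finset (Fin p)), ∏ i ∈ s, Y i ω := rfl
      rw [he]
      exact (integrable_finset_sum _ fun s _ => hYprodint s).const_mul _
    have hint0 : Integrable (Pprod l 0) P := by
      rw [hPj 0]
      refine (integrable_map_measure hhm.aestronglyMeasurable (hVmeas 0)).mp ?_
      rw [hVlaw 0]
      exact (integrable_map_measure hhm.aestronglyMeasurable hYvec.aemeasurable).mpr hcomp_int
    have hCne : (p.choose l : ℝ) ≠ 0 := by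
      exact_mod_cast (Nat.choose_pos hl).ne'
    have hexp : ∫ ω, Pprod l 0 ω ∂P = ∫ x, g x ^ l ∂μ := by
      have e0 : ∫ ω, Pprod l 0 ω ∂P = ∫ ω, hfun (V 0 ω) ∂P := by rw [hPj 0]; rfl
      rw [e0, ← integral_map (hVmeas 0) hhm.aestronglyMeasurable, hVlaw 0,
        integral_map hYvec.aemeasurable hhm.aestronglyMeasurable]
      have he : ∀ ω, hfun ((fun (i : Fin p) => Y i ω)) = ((p.choose l : ℝ))⁻¹ *
          ∑ s ∈ Finset.powersetCard l (Finset.univ : Finset (Fin p)), ∏ i ∈ s, Y i ω := fun _ => rfl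
      simp_rw [he]
      rw [integral_const_mul, integral_finset_sum _ fun s _ => hYprodint s,
        Finset.sum_congr rfl fun s hs => by
          rw [hMom s, (Finset.mem_powersetCard.mp hs).2],
        Finset.sum_const, Finset.card_powersetCard, Finset.card_univ, Fintype.card_fin,
        nsmul_eq_mul, ← mul_assoc, inv_mul_cancel₀ hCne, one_mul]
    have hindepP : Pairwise (Function.onFun (IndepFun · · P) fun j => Pprod l j) := by
      intro j k hjk
      have := (hVindep.indepFun hjk).comp hhm hhm
      simpa only [Function.onFun, hPj] using this
    have hident : ∀ j, IdentDistrib (Pprod l j) (Pprod l 0) P P := by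
      intro j
      rw [hPj j, hPj 0]
      exact (IdentDistrib.mk (hVmeas j) (hVmeas 0) (by rw [hVlaw j, hVlaw 0])).comp hhm
    have hslln := ProbabilityTheory.strong_law_ae (fun j => Pprod l j) hint0 hindepP hident
    rw [hexp] at hslln
    filter_upwards [hslln] with ω hω
    have he : (fun N => Pbar l N ω)
        = fun N : ℕ => (N : ℝ)⁻¹ • ∑ j ∈ Finset.range N, Pprod l j ω :=
      funext fun N => by rw [hPbar]; simp [smul_eq_mul]
    rw [he]
    exact hω
  -- Step M : combine
  have hae : ∀ᵐ ω ∂P, ∀ l : ℕ, l ≤ p →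
      Tendsto (fun N => Pbar l N ω) atTop (𝓝 (∫ x, g x ^ l ∂μ)) := by
    rw [ae_all_iff]
    intro l
    by_cases hl : l ≤ p
    · exact (key l hl).mono fun ω h _ => h
    · exact Filter.Eventually.of_forall fun ω h => absurd h hl
  filter_upwards [hae] with ω hω
  rw [hRval]
  have he : (fun N => H N ω) = fun N => ∑ l ∈ Finset.range (p + 1),
      (p.choose l : ℝ) * (-1 : ℝ) ^ (p - l) * (Pbar 1 N ω) ^ (p - l) * Pbar l N ω :=
    funext fun N => hH N ω
  rw [he]
  refine tendsto_finset_sum _ fun l hl => ?_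
  rw [Finset.mem_range] at hl
  have h1 := hω 1 (by omega)
  rw [show (∫ x, g x ^ 1 ∂μ) = c from by rw [hcdef]; simp] at h1
  have hlten := hω l (by omega)
  exact (tendsto_const_nhds.mul (h1.pow (p - l))).mul hlten
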